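/- arXiv:0812.4701 — 5 statements merged into one kernel-verified Lean document; each statement's English description precedes it below -/
import Mathlib

section
/- Let Ω ⊆ ℝ^p be open and let L : Ω → ℝ be twice continuously differentiable. Suppose there is an integer r < p such that the Hessian matrix (∂²L/∂θ_i∂θ_j(θ))_{i,j=1}^p has rank exactly r at every θ ∈ Ω. Then no turning point of L in Ω is isolated: for every θ₀ ∈ Ω with ∇L(θ₀) = 0 and every neighborhood U of θ₀, there exists δ ∈ U with δ ≠ θ₀, ∇L(δ) = 0, and L(δ) = L(θ₀). -/
/-!
Put `G = ∇L`, so that `DG` is the Hessian, of constant rank `r < p`. At a turning point `θ₀`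
let `P` project onto the range of `DG(θ₀)` and `Q` onto its kernel; then `Φ = (P ∘ G, Q)` is a
local diffeomorphism at `θ₀`. For `w ≠ 0` in the kernel, the curve
`γ t = Φ⁻¹ (Φ θ₀ + t (0, w))` keeps `P ∘ G` constant, so `DG` maps `γ'` into `ker P`. Because
`P ∘ DG` is onto the range of `DG(θ₀)` near `θ₀` and `DG` has the same rank there, the two maps
have the same kernel; hence `G ∘ γ` has zero derivative and `γ` consists of turning points.
Finally `∇L = 0` along `γ` makes `L ∘ γ` constant.
-/

open Module Filter Topology Matrix

theorem LinearMap.ker_comp_eq_of_surjective {K V W X : Type*} [Field K]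
    [AddCommGroup V] [Module K V] [FiniteDimensional K V] [AddCommGroup W] [Module K W]
    [AddCommGroup X] [Module K X] {f : V →ₗ[K] W} {g : W →ₗ[K] X}
    (hgf : Function.Surjective (g ∘ₗ f)) (hf : finrank K (range f) ≤ finrank K X) :
    ker (g ∘ₗ f) = ker f := by
  refine (Submodule.eq_of_le_of_finrank_le (ker_le_ker_comp f g) ?_).symm
  have := finrank_range_add_finrank_ker f
  have := finrank_range_add_finrank_ker (g ∘ₗ f)
  rw [range_eq_top.2 hgf, finrank_top] at this
  omega

theorem LinearMap.comp_inr_eq_zero_of_prod_comp_eq_id {K V W X Y : Type*} [Field K]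
    [AddCommGroup V] [Module K V] [FiniteDimensional K V] [AddCommGroup W] [Module K W]
    [AddCommGroup X] [Module K X] [AddCommGroup Y] [Module K Y] {f : V →ₗ[K] W}
    {g : W →ₗ[K] X} {h : V →ₗ[K] Y} {T : X × Y →ₗ[K] V} (hT : (g ∘ₗ f).prod h ∘ₗ T = id)
    (hf : finrank K (range f) ≤ finrank K X) : f ∘ₗ T ∘ₗ inr K X Y = 0 := by
  have hsurj : Function.Surjective (g ∘ₗ f) := fun x =>
    ⟨T (x, 0), congrArg Prod.fst (LinearMap.congr_fun hT (x, 0))⟩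
  ext y
  have hy : T (0, y) ∈ ker (g ∘ₗ f) := congrArg Prod.fst (LinearMap.congr_fun hT (0, y))
  rwa [ker_comp_eq_of_surjective hsurj hf] at hy

theorem LinearMap.bijective_prod_of_retractions {K V W : Type*} [Field K]
    [AddCommGroup V] [Module K V] [FiniteDimensional K V] [AddCommGroup W] [Module K W]
    (D : V →ₗ[K] W) (P : W →ₗ[K] range D) (hP : ∀ y : range D, P y = y)
    (Q : V →ₗ[K] ker D) (hQ : ∀ v : ker D, Q v = v) :
    Function.Bijective ((P ∘ₗ D).prod Q) := by
  have hinj : Function.Injective ((P ∘ₗ D).prod Q) := by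
    rw [← ker_eq_bot, Submodule.eq_bot_iff]
    intro v hv
    simp only [ker_prod, Submodule.mem_inf, mem_ker, coe_comp, Function.comp_apply] at hv
    have hDv : D v = 0 := by simpa [hv.1] using (hP ⟨D v, mem_range_self D v⟩).symm
    simpa [hv.2] using congrArg Subtype.val (hQ ⟨v, hDv⟩).symm
  refine ⟨hinj, (injective_iff_surjective_of_finrank_eq_finrank ?_).1 hinj⟩
  rw [finrank_prod, finrank_range_add_finrank_ker]

theorem Filter.Eventually.eq_of_hasDerivAt_zero {F : Type*} [NormedAddCommGroup F]
    [NormedSpace ℝ F] {f : ℝ → F} {t₀ : ℝ} (h : ∀ᶠ t in 𝓝 t₀, HasDerivAt f 0 t) :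
    ∀ᶠ t in 𝓝 t₀, f t = f t₀ := by
  obtain ⟨ε, hε, hball⟩ := Metric.eventually_nhds_iff_ball.1 h
  filter_upwards [Metric.ball_mem_nhds t₀ hε] with t ht
  exact Metric.isOpen_ball.is_const_of_deriv_eq_zero (convex_ball t₀ ε).isPreconnected
    (fun s hs => (hball s hs).differentiableAt.differentiableWithinAt)
    (fun s hs => (hball s hs).deriv) ht (Metric.mem_ball_self hε)

theorem ContDiffAt.eventually_fderiv_comp_fderiv_localInverse {𝕂 E F : Type*} [RCLike 𝕂]
    [NormedAddCommGroup E] [NormedSpace 𝕂 E] [CompleteSpace E] [NormedAddCommGroup F]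
    [NormedSpace 𝕂 F] {Φ : E → F} {Φ' : E ≃L[𝕂] F} {x₀ : E} (hΦ : ContDiffAt 𝕂 1 Φ x₀)
    (hΦ' : HasFDerivAt Φ (Φ' : E →L[𝕂] F) x₀) :
    ∀ᶠ y in 𝓝 (Φ x₀), Φ (hΦ.localInverse hΦ' one_ne_zero y) = y ∧
      DifferentiableAt 𝕂 (hΦ.localInverse hΦ' one_ne_zero) y ∧
      (fderiv 𝕂 Φ (hΦ.localInverse hΦ' one_ne_zero y)).comp
        (fderiv 𝕂 (hΦ.localInverse hΦ' one_ne_zero) y) = ContinuousLinearMap.id 𝕂 F := by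
  set ψ := hΦ.localInverse hΦ' one_ne_zero
  have hstrict := hΦ.hasStrictFDerivAt' hΦ' one_ne_zero
  have hright : ∀ᶠ y in 𝓝 (Φ x₀), Φ (ψ y) = y := hstrict.eventually_right_inverse
  have hψ : ∀ᶠ y in 𝓝 (Φ x₀), ContDiffAt 𝕂 1 ψ y :=
    (hΦ.to_localInverse hΦ' one_ne_zero).eventually (by simp)
  have hΦψ : ∀ᶠ y in 𝓝 (Φ x₀), ContDiffAt 𝕂 1 Φ (ψ y) :=
    hstrict.localInverse_tendsto.eventually (hΦ.eventually (by simp))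
  filter_upwards [hright, eventually_eventually_nhds.2 hright, hψ, hΦψ] with y hy hy' hψy hΦy
  refine ⟨hy, hψy.differentiableAt one_ne_zero, ?_⟩
  exact ((hΦy.differentiableAt one_ne_zero).hasFDerivAt.comp y
    (hψy.differentiableAt one_ne_zero).hasFDerivAt).unique
    ((hasFDerivAt_id y).congr_of_eventuallyEq hy')

theorem exists_curve_in_fiber_of_bijective_prod {E F X Y : Type*} [NormedAddCommGroup E]
    [NormedSpace ℝ E] [FiniteDimensional ℝ E] [NormedAddCommGroup F] [NormedSpace ℝ F]
    [NormedAddCommGroup X] [NormedSpace ℝ X] [NormedAddCommGroup Y] [NormedSpace ℝ Y]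
    {G : E → F} {x₀ : E} (hG : ContDiffAt ℝ 1 G x₀) (g : F →L[ℝ] X) (h : E →L[ℝ] Y)
    (hgh : Function.Bijective ((g.comp (fderiv ℝ G x₀)).prod h))
    (hrank : ∀ᶠ x in 𝓝 x₀, finrank ℝ (LinearMap.range (fderiv ℝ G x).toLinearMap) ≤ finrank ℝ X)
    (y : Y) :
    ∃ γ : ℝ → E, γ 0 = x₀ ∧
      ∀ᶠ t in 𝓝 0, DifferentiableAt ℝ γ t ∧ G (γ t) = G x₀ ∧ h (γ t) = h x₀ + t • y := by
  set Φ : E → X × Y := fun x => (g (G x), h x)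
  have hΦ_fderiv : ∀ᶠ x in 𝓝 x₀, DifferentiableAt ℝ G x ∧
      fderiv ℝ Φ x = (g.comp (fderiv ℝ G x)).prod h := by
    filter_upwards [hG.eventually (by simp)] with x hx
    have hGx := hx.differentiableAt one_ne_zero
    exact ⟨hGx, ((g.hasFDerivAt.comp x hGx.hasFDerivAt).prodMk h.hasFDerivAt).fderiv⟩
  have hΦ : ContDiffAt ℝ 1 Φ x₀ := (g.contDiff.contDiffAt.comp x₀ hG).prodMk h.contDiff.contDiffAt
  let e : E ≃L[ℝ] X × Y := (LinearEquiv.ofBijective _ hgh).toContinuousLinearEquiv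
  have hΦ' : HasFDerivAt Φ (e : E →L[ℝ] X × Y) x₀ := by
    have hΦd := (hΦ.differentiableAt one_ne_zero).hasFDerivAt
    rwa [hΦ_fderiv.self_of_nhds.2] at hΦd
  set ψ := hΦ.localInverse hΦ' one_ne_zero
  have hψ : Tendsto ψ (𝓝 (Φ x₀)) (𝓝 x₀) :=
    (hΦ.hasStrictFDerivAt' hΦ' one_ne_zero).localInverse_tendsto
  set k : X × Y := (0, y)
  set a : ℝ → X × Y := fun t => Φ x₀ + t • k
  have ha (t : ℝ) : HasDerivAt a k t := by
    simpa only [id, one_smul] using ((hasDerivAt_id t).smul_const k).const_add (Φ x₀)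
  have ha₀ : a 0 = Φ x₀ := by simp [a]
  have ha_tendsto : Tendsto a (𝓝 0) (𝓝 (Φ x₀)) := ha₀ ▸ (ha 0).continuousAt.tendsto
  have hγ : ∀ᶠ t in 𝓝 0, DifferentiableAt ℝ (ψ ∘ a) t ∧ HasDerivAt (G ∘ ψ ∘ a) 0 t ∧
      Φ (ψ (a t)) = a t := by
    filter_upwards [ha_tendsto.eventually (hΦ.eventually_fderiv_comp_fderiv_localInverse hΦ'),
      ha_tendsto.eventually (hψ.eventually (hΦ_fderiv.and hrank))]
      with t ⟨hΦψ, hψd, hinv⟩ ⟨⟨hGd, hΦd⟩, hrankt⟩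
    rw [hΦd] at hinv
    have hγ' : HasDerivAt (ψ ∘ a) (fderiv ℝ ψ (a t) k) t :=
      hψd.hasFDerivAt.comp_hasDerivAt t (ha t)
    -- `DΦ` maps the velocity to `(0, y)`, and the rank bound forces it into `ker DG`
    have hv : fderiv ℝ G (ψ (a t)) (fderiv ℝ ψ (a t) k) = 0 := LinearMap.congr_fun
      (LinearMap.comp_inr_eq_zero_of_prod_comp_eq_id
        (congrArg ContinuousLinearMap.toLinearMap hinv) hrankt) y
    exact ⟨hγ'.differentiableAt, by simpa [hv] using hGd.hasFDerivAt.comp_hasDerivAt t hγ', hΦψ⟩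
  have hψ₀ : ψ (Φ x₀) = x₀ := hΦ.localInverse_apply_image hΦ' one_ne_zero
  refine ⟨ψ ∘ a, by simp [ha₀, hψ₀], ?_⟩
  filter_upwards [hγ, (hγ.mono fun t h => h.2.1).eq_of_hasDerivAt_zero] with t ht hGt
  refine ⟨ht.1, by simpa [ha₀, hψ₀] using hGt, ?_⟩
  simpa [Φ, a, k] using congrArg Prod.snd ht.2.2

theorem exists_curve_in_fiber_of_constant_rank {E F : Type*} [NormedAddCommGroup E]
    [NormedSpace ℝ E] [FiniteDimensional ℝ E] [NormedAddCommGroup F] [NormedSpace ℝ F]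
    {G : E → F} {x₀ : E} (hG : ContDiffAt ℝ 1 G x₀)
    (hrank : ∀ᶠ x in 𝓝 x₀, finrank ℝ (LinearMap.range (fderiv ℝ G x).toLinearMap) =
      finrank ℝ (LinearMap.range (fderiv ℝ G x₀).toLinearMap))
    (hlt : finrank ℝ (LinearMap.range (fderiv ℝ G x₀).toLinearMap) < finrank ℝ E) :
    ∃ γ : ℝ → E, γ 0 = x₀ ∧
      ∀ᶠ t in 𝓝 0, DifferentiableAt ℝ γ t ∧ G (γ t) = G x₀ ∧ (γ t = x₀ → t = 0) := by
  set D := fderiv ℝ G x₀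
  obtain ⟨w, hw, hw₀⟩ := Submodule.exists_mem_ne_zero_of_ne_bot fun h =>
    hlt.ne (LinearMap.finrank_range_of_inj (LinearMap.ker_eq_bot.1 h))
  obtain ⟨P, hP⟩ :=
    Submodule.ClosedComplemented.of_finiteDimensional (LinearMap.range D.toLinearMap)
  obtain ⟨Q, hQ⟩ := Submodule.ClosedComplemented.of_finiteDimensional (LinearMap.ker D.toLinearMap)
  obtain ⟨γ, hγ₀, hγ⟩ := exists_curve_in_fiber_of_bijective_prod hG P Q
    (LinearMap.bijective_prod_of_retractions D.toLinearMap P.toLinearMap hP Q hQ)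
    (hrank.mono fun _ h => h.le) ⟨w, hw⟩
  refine ⟨γ, hγ₀, hγ.mono fun t ⟨hγd, hGγ, hQγ⟩ => ⟨hγd, hGγ, fun hγt => ?_⟩⟩
  have htw : t • (⟨w, hw⟩ : LinearMap.ker D.toLinearMap) = 0 := by simpa [hγt] using hQγ
  exact (smul_eq_zero.1 htw).resolve_right (by simpa [Subtype.ext_iff] using hw₀)

theorem Matrix.rank_of_apply_single_single {n : Type*} [Fintype n] [DecidableEq n]
    (B : (n → ℝ) →L[ℝ] (n → ℝ) →L[ℝ] ℝ) :
    (Matrix.of fun i j => B (Pi.single i 1) (Pi.single j 1)).rank =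
      finrank ℝ (LinearMap.range B.toLinearMap) := by
  have hsingle (j : n) (x : ℝ) : Pi.single j x = x • Pi.single (M := fun _ => ℝ) j 1 := by
    rw [← Pi.single_smul', smul_eq_mul, mul_one]
  let J : ((n → ℝ) →L[ℝ] ℝ) →ₗ[ℝ] (n → ℝ) :=
    LinearMap.pi fun j => (ContinuousLinearMap.apply ℝ ℝ (Pi.single j (1 : ℝ))).toLinearMap
  have hJ : Function.Injective J := by
    rw [← LinearMap.ker_eq_bot, Submodule.eq_bot_iff]
    intro φ hφ
    refine ContinuousLinearMap.coe_injective (LinearMap.pi_ext fun j x => ?_)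
    have := congrFun (LinearMap.mem_ker.1 hφ) j
    simp only [J, LinearMap.pi_apply, ContinuousLinearMap.coe_coe,
      ContinuousLinearMap.apply_apply, Pi.zero_apply] at this
    simp [hsingle j x, this]
  have hM : (Matrix.of fun i j => B (Pi.single i 1) (Pi.single j 1))ᵀ.mulVecLin =
      J ∘ₗ B.toLinearMap := by
    refine LinearMap.pi_ext fun i x => funext fun j => ?_
    rw [hsingle i x]
    simp [J]
  rw [← Matrix.rank_transpose, Matrix.rank, hM, LinearMap.range_comp]
  exact (Submodule.equivMapOfInjective J hJ _).finrank_eq.symm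

theorem rank_hessian_eq_finrank_range_fderiv_fderiv {n : Type*} [Fintype n] [DecidableEq n]
    {L : (n → ℝ) → ℝ} {θ : n → ℝ} (hL : DifferentiableAt ℝ (fderiv ℝ L) θ) :
    (Matrix.of fun i j : n =>
        fderiv ℝ (fun θ' => fderiv ℝ L θ' (Pi.single j 1)) θ (Pi.single i 1)).rank =
      finrank ℝ (LinearMap.range (fderiv ℝ (fderiv ℝ L) θ).toLinearMap) := by
  rw [← Matrix.rank_of_apply_single_single]
  congr
  ext i j
  simp [fderiv_clm_apply hL (differentiableAt_const _)]

/-- Theorem 1(iii), turning-point assertion: if the Hessian of a C² function `L` has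
constant rank `r < p` throughout the open set `Ω`, then no turning point of `L` in `Ω`
is isolated: every neighborhood of a turning point `θ₀` contains a different turning
point `δ` with the same value `L δ = L θ₀`. -/
theorem stmt_3 {p r : ℕ} (hr : r < p) {Ω : Set (Fin p → ℝ)} (hΩ : IsOpen Ω)
    (L : (Fin p → ℝ) → ℝ) (hL : ContDiffOn ℝ 2 L Ω)
    (hH : ∀ θ ∈ Ω, (Matrix.of fun i j : Fin p =>
        fderiv ℝ (fun θ' => fderiv ℝ L θ' (Pi.single j 1)) θ (Pi.single i 1)).rank = r) :
    ∀ θ₀ ∈ Ω, fderiv ℝ L θ₀ = 0 →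
      ∀ U ∈ nhds θ₀, ∃ δ ∈ U, δ ≠ θ₀ ∧ fderiv ℝ L δ = 0 ∧ L δ = L θ₀ := by
  intro θ₀ hθ₀ hgrad U hU
  have hL' : ContDiffOn ℝ 1 (fderiv ℝ L) Ω := hL.fderiv_of_isOpen hΩ (by norm_num)
  have hrank : ∀ᶠ θ in 𝓝 θ₀,
      finrank ℝ (LinearMap.range (fderiv ℝ (fderiv ℝ L) θ).toLinearMap) = r := by
    filter_upwards [hΩ.mem_nhds hθ₀] with θ hθ
    rw [← hH θ hθ, rank_hessian_eq_finrank_range_fderiv_fderiv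
      ((hL'.differentiableOn one_ne_zero θ hθ).differentiableAt (hΩ.mem_nhds hθ))]
  obtain ⟨γ, hγ₀, hγ⟩ := exists_curve_in_fiber_of_constant_rank (hL'.contDiffAt (hΩ.mem_nhds hθ₀))
    (hrank.mono fun θ hθ => hθ.trans hrank.self_of_nhds.symm)
    (by simpa [hrank.self_of_nhds] using hr)
  have hγ_tendsto : Tendsto γ (𝓝 0) (𝓝 θ₀) := hγ₀ ▸ hγ.self_of_nhds.1.continuousAt.tendsto
  have hLγ : ∀ᶠ t in 𝓝 0, HasDerivAt (L ∘ γ) 0 t := by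
    filter_upwards [hγ, hγ_tendsto.eventually_mem (hΩ.mem_nhds hθ₀)] with t ⟨hγd, hGγ, _⟩ hΩt
    have hLd := (hL.differentiableOn (by norm_num) _ hΩt).differentiableAt (hΩ.mem_nhds hΩt)
    simpa [hGγ, hgrad] using hLd.hasFDerivAt.comp_hasDerivAt t hγd.hasDerivAt
  obtain ⟨t, ht, ⟨-, hGγ, hγ_ne⟩, hLt, hUt⟩ :=
    (hγ.and (hLγ.eq_of_hasDerivAt_zero.and (hγ_tendsto.eventually_mem hU))).exists_gt
  exact ⟨γ t, hUt, fun h => ht.ne' (hγ_ne h), hGγ.trans hgrad, by simpa [hγ₀] using hLt⟩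
end

section
/- Let Ω ⊆ ℝ^p be open and let L : Ω → ℝ be twice continuously differentiable. Suppose there is an integer r < p such that the Hessian matrix (∂²L/∂θ_i∂θ_j(θ))_{i,j=1}^p has rank exactly r at every θ ∈ Ω. Then no local maximum of L in Ω is isolated: for every local maximum θ₀ ∈ Ω of L and every neighborhood U of θ₀, there exists δ ∈ U with δ ≠ θ₀ such that δ is also a local maximum of L and L(δ) = L(θ₀). -/
/-!
If `θ₀` were not accompanied by other local maxima of the same value, it would be a strict local
maximum. Tilting `L` by a small linear functional `φ` keeps the maximum of `L - φ` on a small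
closed ball in its interior, where the gradient of `L` equals `φ`; so the gradient map covers a
neighbourhood of `0`. But its derivative is the Hessian, which is singular, so by the Sard-type
bound for maps with vanishing Jacobian its image is Lebesgue-null.
-/

open Metric MeasureTheory Set Filter Topology

theorem IsLocalMax.eventually_lt_of_eventually_not_isLocalMax {X β : Type*}
    [TopologicalSpace X] [PartialOrder β] {f : X → β} {a : X} (hmax : IsLocalMax f a)
    (hiso : ∀ᶠ x in 𝓝 a, x ≠ a → IsLocalMax f x → f x ≠ f a) :
    ∀ᶠ x in 𝓝[≠] a, f x < f a := by
  rw [eventually_nhdsWithin_iff]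
  filter_upwards [hmax.eventually_nhds, hmax, hiso] with x hxmax hle hx hne
  exact lt_of_le_of_ne hle fun heq => hx hne (hxmax.mono fun y hy => hy.trans_eq heq.symm) heq

section Tilting

variable {E : Type*} [NormedAddCommGroup E] [NormedSpace ℝ E] [ProperSpace E]
  {f : E → ℝ} {a : E}

theorem ball_subset_image_fderiv_ball {ρ c : ℝ} (hρ : 0 < ρ)
    (hf : ContinuousOn f (closedBall a ρ)) (hfd : ∀ x ∈ ball a ρ, DifferentiableAt ℝ f x)
    (hsph : ∀ y ∈ sphere a ρ, f y + c ≤ f a) :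
    ball (0 : StrongDual ℝ E) (c / ρ) ⊆ fderiv ℝ f '' ball a ρ := by
  intro φ hφ
  rw [mem_ball_zero_iff, lt_div_iff₀ hρ] at hφ
  have hsph' : ∀ y ∈ sphere a ρ, φ a - f a < φ y - f y := by
    intro y hy
    have hφy : -(‖φ‖ * ρ) ≤ φ (y - a) := by
      have := φ.le_opNorm (y - a)
      rw [Real.norm_eq_abs, mem_sphere_iff_norm.1 hy] at this
      exact neg_le_of_abs_le this
    rw [map_sub] at hφy
    linarith [hsph y hy]
  obtain ⟨x, hx, hmin⟩ := exists_isLocalMin_mem_ball (f := fun y => φ y - f y)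
    (φ.continuous.continuousOn.sub hf) (mem_closedBall_self hρ.le) hsph'
  refine ⟨x, hx, ?_⟩
  have h := hmin.fderiv_eq_zero
  rw [fderiv_fun_sub φ.differentiableAt (hfd x hx), φ.fderiv, sub_eq_zero] at h
  exact h.symm

theorem image_fderiv_mem_nhds_zero_of_eventually_lt {s : Set E}
    (hf : ∀ᶠ x in 𝓝 a, DifferentiableAt ℝ f x) (hmax : ∀ᶠ x in 𝓝[≠] a, f x < f a)
    (hs : s ∈ 𝓝 a) : fderiv ℝ f '' s ∈ 𝓝 0 := by
  rw [eventually_nhdsWithin_iff] at hmax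
  obtain ⟨ρ, hρ, hsub⟩ := nhds_basis_closedBall.mem_iff.1 (inter_mem (inter_mem hs hf) hmax)
  have hcont : ContinuousOn f (closedBall a ρ) := fun x hx =>
    (hsub hx).1.2.continuousAt.continuousWithinAt
  obtain ⟨c, hc, hcle⟩ := (isCompact_sphere a ρ).exists_forall_le' (f := fun y => f a - f y)
    (continuousOn_const.sub (hcont.mono sphere_subset_closedBall)) fun y hy =>
      sub_pos.2 ((hsub (sphere_subset_closedBall hy)).2 (ne_of_mem_sphere hy hρ.ne'))
  refine mem_of_superset (ball_mem_nhds 0 (div_pos hc hρ)) ?_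
  have hball : ball a ρ ⊆ s ∩ {x | DifferentiableAt ℝ f x} := fun x hx =>
    (hsub (ball_subset_closedBall hx)).1
  refine (ball_subset_image_fderiv_ball hρ hcont (fun x hx => (hball hx).2) fun y hy => ?_).trans
    (image_mono fun x hx => (hball hx).1)
  linarith [hcle y hy]

end Tilting

theorem LinearMap.toMatrix'_fderiv {𝕜 ι κ : Type*} [NontriviallyNormedField 𝕜] [Fintype ι]
    [DecidableEq ι] [Fintype κ] {G : (ι → 𝕜) → κ → 𝕜} {x : ι → 𝕜}
    (hG : DifferentiableAt 𝕜 G x) :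
    LinearMap.toMatrix' (fderiv 𝕜 G x : (ι → 𝕜) →ₗ[𝕜] κ → 𝕜) =
      Matrix.of fun k i => fderiv 𝕜 (fun y => G y k) x (Pi.single i 1) := by
  ext k i
  rw [LinearMap.toMatrix'_apply, Matrix.of_apply,
    (hasFDerivAt_pi'.1 hG.hasFDerivAt k).fderiv]
  rfl

theorem Matrix.det_eq_zero_of_rank_lt {n R : Type*} [Fintype n] [DecidableEq n] [CommRing R]
    [IsDomain R] {A : Matrix n n R} (h : A.rank < Fintype.card n) : A.det = 0 := by
  by_contra hdet
  exact h.ne (rank_of_det_ne_zero hdet)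

/-- Theorem 1(iii), local-maximum assertion: if the Hessian of a C² function `L` has
constant rank `r < p` throughout the open set `Ω`, then no local maximum of `L` in `Ω`
is isolated: every neighborhood of a local maximum `θ₀` contains a different local
maximum `δ` with the same value `L δ = L θ₀`. -/
theorem stmt_4 {p r : ℕ} (hr : r < p) {Ω : Set (Fin p → ℝ)} (hΩ : IsOpen Ω)
    (L : (Fin p → ℝ) → ℝ) (hL : ContDiffOn ℝ 2 L Ω)
    (hH : ∀ θ ∈ Ω, (Matrix.of fun i j : Fin p =>
        fderiv ℝ (fun θ' => fderiv ℝ L θ' (Pi.single j 1)) θ (Pi.single i 1)).rank = r) :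
    ∀ θ₀ ∈ Ω, IsLocalMax L θ₀ →
      ∀ U ∈ nhds θ₀, ∃ δ ∈ U, δ ≠ θ₀ ∧ IsLocalMax L δ ∧ L δ = L θ₀ := by
  intro θ₀ hθ₀ hmax U hU
  by_contra! hcon
  have hstrict : ∀ᶠ x in 𝓝[≠] θ₀, L x < L θ₀ :=
    hmax.eventually_lt_of_eventually_not_isLocalMax (mem_of_superset hU hcon)
  have hdiff : ∀ θ ∈ Ω, DifferentiableAt ℝ (fderiv ℝ L) θ := fun θ hθ =>
    ((hL.fderiv_of_isOpen hΩ le_rfl).contDiffAt (hΩ.mem_nhds hθ)).differentiableAt one_ne_zero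
  let Ψ := ContinuousLinearEquiv.piRing (𝕜 := ℝ) (E := ℝ) (Fin p)
  let G := fun θ => Ψ (fderiv ℝ L θ)
  have hG : ∀ θ ∈ Ω, DifferentiableAt ℝ G θ := fun θ hθ =>
    Ψ.differentiableAt.comp θ (hdiff θ hθ)
  have hdet : ∀ θ ∈ U ∩ Ω, (fderiv ℝ G θ).det = 0 := by
    intro θ hθ
    rw [ContinuousLinearMap.det, ← LinearMap.det_toMatrix',
      LinearMap.toMatrix'_fderiv (hG θ hθ.2)]
    -- the Jacobian matrix of `G` is, definitionally, the transpose of the Hessian matrix in `hH`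
    exact (Matrix.det_transpose _).trans
      (Matrix.det_eq_zero_of_rank_lt ((hH θ hθ.2).trans_lt (by simpa using hr)))
  have hnull : volume (G '' (U ∩ Ω)) = 0 :=
    addHaar_image_eq_zero_of_det_fderivWithin_eq_zero volume
      (fun θ hθ => (hG θ hθ.2).hasFDerivAt.hasFDerivWithinAt) hdet
  have hgrad : fderiv ℝ L '' (U ∩ Ω) ∈ 𝓝 0 :=
    image_fderiv_mem_nhds_zero_of_eventually_lt
      (eventually_of_mem (hΩ.mem_nhds hθ₀) fun θ hθ =>
        (hL.contDiffAt (hΩ.mem_nhds hθ)).differentiableAt (by norm_num))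
      hstrict (inter_mem hU (hΩ.mem_nhds hθ₀))
  have hnhds : G '' (U ∩ Ω) ∈ 𝓝 0 := by
    simpa [G, image_image] using Ψ.isOpenMap.image_mem_nhds hgrad
  exact (Measure.measure_pos_of_mem_nhds volume hnhds).ne' hnull
end

section
/- Let Ω ⊆ ℝ^k be open and let L : Ω → ℝ be twice continuously differentiable. Let r be the maximum over θ ∈ Ω of the rank of the Hessian matrix (∂²L/∂θ_i∂θ_j(θ))_{i,j=1}^k. Suppose L has a local maximum at a point θ* ∈ Ω at which the Hessian rank equals r, and suppose θ* is an isolated local maximum (there is a neighborhood of θ* in which θ* is the only local maximum of L). Then r = k. -/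
/-!
Let `g = DL`. Near `θ*` the Hessian `Dg` has rank at most `r` by maximality and at least `r`
by lower semicontinuity, so `g` has constant rank `r` there. If `r < k`, the inverse function
theorem applied to `θ ↦ (q (g θ), p θ)`, where `q` projects onto the range of `Dg(θ*)` and `p`
onto its kernel, yields a curve `γ` through `θ*` along which `q ∘ g` is constant while `p`
moves. Constant rank forces `Dg(γ t) γ'(t)` to vanish once its `q`-component does, so
`g ∘ γ = g θ* = 0` and `L ∘ γ` is constant. Points of `γ` near `θ*` then take the maximal
value `L θ*`, hence are local maxima, contradicting isolation.
-/

open Module Set Filter Topology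

section LinearAlgebra

variable {K V V₂ V₃ : Type*} [Field K] [AddCommGroup V] [Module K V] [FiniteDimensional K V]
  [AddCommGroup V₂] [Module K V₂] [AddCommGroup V₃] [Module K V₃]

theorem LinearMap.ker_comp_eq_of_surjective_s7 (T : V →ₗ[K] V₂) (P : V₂ →ₗ[K] V₃)
    (hPT : Function.Surjective (P ∘ₗ T)) (h : finrank K (LinearMap.range T) ≤ finrank K V₃) :
    LinearMap.ker (P ∘ₗ T) = LinearMap.ker T := by
  refine (Submodule.eq_of_le_of_finrank_le (LinearMap.ker_le_ker_comp T P) ?_).symm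
  have := (P ∘ₗ T).finrank_range_add_finrank_ker
  have := T.finrank_range_add_finrank_ker
  rw [LinearMap.range_eq_top.2 hPT, finrank_top] at *
  omega

theorem LinearMap.bijective_prod_of_projections (A : V →ₗ[K] V₂)
    (q : V₂ →ₗ[K] LinearMap.range A) (hq : ∀ w : LinearMap.range A, q w = w)
    (p : V →ₗ[K] LinearMap.ker A) (hp : ∀ v : LinearMap.ker A, p v = v) :
    Function.Bijective ((q ∘ₗ A).prod p) := by
  have hinj : Function.Injective ((q ∘ₗ A).prod p) := by
    rw [← LinearMap.ker_eq_bot, LinearMap.ker_eq_bot']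
    intro v hv
    simp only [LinearMap.prod_apply, Function.prod, LinearMap.comp_apply, Prod.mk_eq_zero] at hv
    have hAv : A v = 0 := by
      simpa [hv.1] using (congrArg Subtype.val (hq ⟨A v, LinearMap.mem_range_self A v⟩)).symm
    simpa [hv.2] using (congrArg Subtype.val (hp ⟨v, hAv⟩)).symm
  refine ⟨hinj, (LinearMap.injective_iff_surjective_of_finrank_eq_finrank ?_).1 hinj⟩
  rw [finrank_prod, A.finrank_range_add_finrank_ker]

end LinearAlgebra

theorem Matrix.rank_of_apply_single_eq_finrank_range {ι : Type*} [Fintype ι] [DecidableEq ι]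
    (H : (ι → ℝ) →L[ℝ] (ι → ℝ) →L[ℝ] ℝ) :
    (Matrix.of fun i j : ι => H (Pi.single i 1) (Pi.single j 1)).rank =
      finrank ℝ (LinearMap.range (H : (ι → ℝ) →ₗ[ℝ] (ι → ℝ) →L[ℝ] ℝ)) := by
  let ev : ((ι → ℝ) →L[ℝ] ℝ) →ₗ[ℝ] (ι → ℝ) :=
    LinearMap.pi fun j => (ContinuousLinearMap.apply ℝ ℝ (Pi.single j 1 : ι → ℝ) :
      ((ι → ℝ) →L[ℝ] ℝ) →ₗ[ℝ] ℝ)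
  have hev : Function.Injective ev := by
    rw [← LinearMap.ker_eq_bot, LinearMap.ker_eq_bot']
    intro φ hφ
    have : (φ : (ι → ℝ) →ₗ[ℝ] ℝ) = 0 := LinearMap.pi_ext fun j x => by
      have hj : φ (Pi.single j 1) = 0 := congrFun hφ j
      rw [show (Pi.single j x : ι → ℝ) = x • Pi.single j 1 by simp [← Pi.single_smul]]
      simp [hj]
    exact ContinuousLinearMap.coe_injective this
  have hM : (Matrix.of fun i j : ι => H (Pi.single i 1) (Pi.single j 1)).transpose.mulVecLin =
      ev ∘ₗ (H : (ι → ℝ) →ₗ[ℝ] (ι → ℝ) →L[ℝ] ℝ) := by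
    ext i j
    simp [ev]
  rw [← Matrix.rank_transpose, Matrix.rank, hM, LinearMap.range_comp]
  exact (Submodule.equivMapOfInjective ev hev _).finrank_eq.symm

theorem Matrix.rank_hessian_eq_finrank_range {ι : Type*} [Fintype ι] [DecidableEq ι]
    {L : (ι → ℝ) → ℝ} {θ : ι → ℝ} (hL : DifferentiableAt ℝ (fderiv ℝ L) θ) :
    (Matrix.of fun i j : ι =>
        fderiv ℝ (fun θ' => fderiv ℝ L θ' (Pi.single j 1)) θ (Pi.single i 1)).rank =
      finrank ℝ (LinearMap.range
        (fderiv ℝ (fderiv ℝ L) θ : (ι → ℝ) →ₗ[ℝ] (ι → ℝ) →L[ℝ] ℝ)) := by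
  have hentry : ∀ v : ι → ℝ, fderiv ℝ (fun θ' => fderiv ℝ L θ' v) θ =
      (ContinuousLinearMap.apply ℝ ℝ v).comp (fderiv ℝ (fderiv ℝ L) θ) := fun v =>
    ((ContinuousLinearMap.apply ℝ ℝ v).hasFDerivAt.comp θ hL.hasFDerivAt).fderiv
  simp only [hentry]
  exact Matrix.rank_of_apply_single_eq_finrank_range _

theorem ContinuousAt.eventually_surjective {X E F : Type*} [TopologicalSpace X]
    [NormedAddCommGroup E] [NormedSpace ℝ E] [NormedAddCommGroup F] [NormedSpace ℝ F]
    [FiniteDimensional ℝ F] {T : X → E →L[ℝ] F} {x₀ : X} (hT : ContinuousAt T x₀)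
    (hsurj : Function.Surjective (T x₀)) : ∀ᶠ x in 𝓝 x₀, Function.Surjective (T x) := by
  obtain ⟨S, hS⟩ := (T x₀ : E →ₗ[ℝ] F).exists_rightInverse_of_surjective
    (LinearMap.range_eq_top.2 hsurj)
  let S' : F →L[ℝ] E := LinearMap.toContinuousLinearMap S
  have hS' : (T x₀).comp S' = ContinuousLinearMap.id ℝ F :=
    ContinuousLinearMap.coe_injective hS
  have hcont : ContinuousAt (fun x => (T x).comp S') x₀ :=
    ((ContinuousLinearMap.compL ℝ F E F).flip S').continuous.continuousAt.comp hT
  have hunit : ∀ᶠ x in 𝓝 x₀, IsUnit ((T x).comp S') :=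
    hcont.preimage_mem_nhds (Units.isOpen.mem_nhds (by rw [hS']; exact isUnit_one))
  filter_upwards [hunit] with x hx
  intro y
  obtain ⟨u, hu⟩ := hx
  refine ⟨S' (u.inv y), ?_⟩
  change ((T x).comp S') (u.inv y) = y
  rw [← hu]
  exact congrArg (fun f : F →L[ℝ] F => f y) u.val_inv

theorem eventually_eq_of_eventually_hasDerivAt_zero {F : Type*} [NormedAddCommGroup F]
    [NormedSpace ℝ F] {h : ℝ → F} {a : ℝ} (hh : ∀ᶠ t in 𝓝 a, HasDerivAt h 0 t) :
    ∀ᶠ t in 𝓝 a, h t = h a := by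
  obtain ⟨ε, hε, hball⟩ := Metric.eventually_nhds_iff_ball.1 hh
  filter_upwards [Metric.ball_mem_nhds a hε] with t ht
  exact Metric.isOpen_ball.is_const_of_deriv_eq_zero (convex_ball a ε).isPreconnected
    (fun s hs => (hball s hs).differentiableAt.differentiableWithinAt)
    (fun s hs => (hball s hs).deriv) ht (Metric.mem_ball_self hε)

theorem IsLocalMax.eventually_isLocalMax_of_eq {X : Type*} [TopologicalSpace X] {L : X → ℝ}
    {x₀ : X} (hmax : IsLocalMax L x₀) : ∀ᶠ y in 𝓝 x₀, L y = L x₀ → IsLocalMax L y := by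
  filter_upwards [hmax.eventually_nhds] with y hy hLy
  rw [IsLocalMax, IsMaxFilter, hLy]
  exact hy

section ConstantRank

variable {E F : Type*} [NormedAddCommGroup E] [NormedSpace ℝ E]
  [NormedAddCommGroup F] [NormedSpace ℝ F]

theorem hasDerivAt_comp_zero_of_eventually_const {G : Type*} [NormedAddCommGroup G]
    [NormedSpace ℝ G] {γ : ℝ → E} {g : E → F} {t : ℝ} (q : F →L[ℝ] G)
    (hγ : DifferentiableAt ℝ γ t) (hg : DifferentiableAt ℝ g (γ t))
    (hker : ∀ v, q (fderiv ℝ g (γ t) v) = 0 → fderiv ℝ g (γ t) v = 0)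
    (hconst : ∀ᶠ s in 𝓝 t, q (g (γ s)) = q (g (γ t))) : HasDerivAt (g ∘ γ) 0 t := by
  have hgγ : HasDerivAt (g ∘ γ) (fderiv ℝ g (γ t) (deriv γ t)) t :=
    hg.hasFDerivAt.comp_hasDerivAt t hγ.hasDerivAt
  have hqgγ : HasDerivAt (q ∘ g ∘ γ) 0 t :=
    (hasDerivAt_const t (q (g (γ t)))).congr_of_eventuallyEq hconst
  rwa [hker _ ((q.hasFDerivAt.comp_hasDerivAt t hgγ).unique hqgγ)] at hgγ

theorem ContDiffAt.exists_curve_of_rightInverse {G : Type*} [NormedAddCommGroup G]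
    [NormedSpace ℝ G] {Φ : E → G} {ψ : G → E} {x₀ : E} (hψ : ContDiffAt ℝ 1 ψ (Φ x₀))
    (hψ0 : ψ (Φ x₀) = x₀) (hright : ∀ᶠ y in 𝓝 (Φ x₀), Φ (ψ y) = y) {w : G} (hw : w ≠ 0) :
    ∃ γ : ℝ → E, γ 0 = x₀ ∧ Tendsto γ (𝓝[≠] 0) (𝓝[≠] x₀) ∧
      ∀ᶠ t in 𝓝 0, DifferentiableAt ℝ γ t ∧ Φ (γ t) = Φ x₀ + t • w := by
  have hc : Tendsto (fun t : ℝ => Φ x₀ + t • w) (𝓝 0) (𝓝 (Φ x₀)) := by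
    simpa using ((continuous_id.smul continuous_const).const_add (Φ x₀)).tendsto (0 : ℝ)
  have hright' : ∀ᶠ t in 𝓝 (0 : ℝ), Φ (ψ (Φ x₀ + t • w)) = Φ x₀ + t • w := hc.eventually hright
  have hγ : Tendsto (fun t : ℝ => ψ (Φ x₀ + t • w)) (𝓝 0) (𝓝 x₀) := by
    have := hψ.continuousAt.tendsto.comp hc
    rwa [hψ0] at this
  refine ⟨fun t => ψ (Φ x₀ + t • w), by simpa using hψ0, ?_, ?_⟩
  · refine tendsto_nhdsWithin_of_tendsto_nhds_of_eventually_within _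
      (hγ.mono_left nhdsWithin_le_nhds) ?_
    filter_upwards [nhdsWithin_le_nhds hright', self_mem_nhdsWithin] with t ht ht0 hx
    rw [show ψ (Φ x₀ + t • w) = x₀ from hx] at ht
    exact ht0 (by simpa [hw] using ht)
  · filter_upwards [hc.eventually (hψ.eventually (by simp)), hright'] with t ht hΦt
    exact ⟨(ht.differentiableAt one_ne_zero).comp t (by fun_prop), hΦt⟩

variable [FiniteDimensional ℝ E]

theorem ContDiffAt.eventually_ker_comp_fderiv_eq {g : E → F} {x₀ : E} (hg : ContDiffAt ℝ 1 g x₀)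
    (hrank : ∀ᶠ x in 𝓝 x₀, finrank ℝ (LinearMap.range (fderiv ℝ g x : E →ₗ[ℝ] F)) ≤
      finrank ℝ (LinearMap.range (fderiv ℝ g x₀ : E →ₗ[ℝ] F)))
    (q : F →L[ℝ] LinearMap.range (fderiv ℝ g x₀ : E →ₗ[ℝ] F))
    (hq : ∀ w : LinearMap.range (fderiv ℝ g x₀ : E →ₗ[ℝ] F), q w = w) :
    ∀ᶠ x in 𝓝 x₀, ∀ v, q (fderiv ℝ g x v) = 0 → fderiv ℝ g x v = 0 := by
  have hsurj : Function.Surjective (q.comp (fderiv ℝ g x₀)) := by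
    rintro ⟨_, v, rfl⟩
    exact ⟨v, hq ⟨_, v, rfl⟩⟩
  have hcont : ContinuousAt (fun x => q.comp (fderiv ℝ g x)) x₀ :=
    (ContinuousLinearMap.compL ℝ E F _ q).continuous.continuousAt.comp
      (hg.continuousAt_fderiv one_ne_zero)
  filter_upwards [hcont.eventually_surjective hsurj, hrank] with x hx hxr v hv
  have hker := LinearMap.ker_comp_eq_of_surjective_s7 (fderiv ℝ g x : E →ₗ[ℝ] F)
    (q : F →ₗ[ℝ] LinearMap.range (fderiv ℝ g x₀ : E →ₗ[ℝ] F)) hx hxr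
  exact (SetLike.ext_iff.1 hker v).1 hv

theorem ContDiffAt.exists_curve_of_finrank_range_fderiv_lt {g : E → F} {x₀ : E}
    (hg : ContDiffAt ℝ 1 g x₀)
    (hrank : ∀ᶠ x in 𝓝 x₀, finrank ℝ (LinearMap.range (fderiv ℝ g x : E →ₗ[ℝ] F)) ≤
      finrank ℝ (LinearMap.range (fderiv ℝ g x₀ : E →ₗ[ℝ] F)))
    (hlt : finrank ℝ (LinearMap.range (fderiv ℝ g x₀ : E →ₗ[ℝ] F)) < finrank ℝ E) :
    ∃ γ : ℝ → E, γ 0 = x₀ ∧ Tendsto γ (𝓝[≠] 0) (𝓝[≠] x₀) ∧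
      ∀ᶠ t in 𝓝 0, DifferentiableAt ℝ γ t ∧ g (γ t) = g x₀ := by
  set A := fderiv ℝ g x₀
  obtain ⟨q, hq⟩ := Submodule.ClosedComplemented.of_finiteDimensional
    (LinearMap.range (A : E →ₗ[ℝ] F))
  obtain ⟨p, hp⟩ := Submodule.ClosedComplemented.of_finiteDimensional
    (LinearMap.ker (A : E →ₗ[ℝ] F))
  let Φ : E → LinearMap.range (A : E →ₗ[ℝ] F) × LinearMap.ker (A : E →ₗ[ℝ] F) :=
    fun x => (q (g x), p x)
  have hΦ : ContDiffAt ℝ 1 Φ x₀ :=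
    (q.contDiff.comp_contDiffAt x₀ hg).prodMk p.contDiff.contDiffAt
  let e := (LinearEquiv.ofBijective _ (LinearMap.bijective_prod_of_projections
    (A : E →ₗ[ℝ] F) q hq p hp)).toContinuousLinearEquiv
  have hΦ' : HasFDerivAt Φ (e : E →L[ℝ] _) x₀ :=
    (q.hasFDerivAt.comp x₀ (hg.differentiableAt one_ne_zero).hasFDerivAt).prodMk p.hasFDerivAt
  obtain ⟨u, hu⟩ : ∃ u : LinearMap.ker (A : E →ₗ[ℝ] F), u ≠ 0 := by
    refine (Module.finrank_pos_iff_exists_ne_zero (R := ℝ)).1 ?_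
    have := (A : E →ₗ[ℝ] F).finrank_range_add_finrank_ker
    omega
  obtain ⟨γ, hγ0, hγ, hev⟩ := (hΦ.to_localInverse hΦ' one_ne_zero).exists_curve_of_rightInverse
    (hΦ.localInverse_apply_image hΦ' one_ne_zero)
    (hΦ.hasStrictFDerivAt' hΦ' one_ne_zero).eventually_right_inverse
    (w := ((0 : LinearMap.range (A : E →ₗ[ℝ] F)), u)) (by simpa using hu)
  refine ⟨γ, hγ0, hγ, ?_⟩
  have hγcont : Tendsto γ (𝓝 0) (𝓝 x₀) := hγ0 ▸ hev.self_of_nhds.1.continuousAt.tendsto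
  have hgx : ∀ᶠ x in 𝓝 x₀, DifferentiableAt ℝ g x ∧
      ∀ v, q (fderiv ℝ g x v) = 0 → fderiv ℝ g x v = 0 :=
    ((hg.eventually (by simp)).mono fun x hx => hx.differentiableAt one_ne_zero).and
      (hg.eventually_ker_comp_fderiv_eq hrank q hq)
  have hqg : ∀ᶠ t in 𝓝 0, q (g (γ t)) = q (g x₀) :=
    hev.mono fun t ht => by simpa [Φ] using congrArg Prod.fst ht.2
  have hderiv : ∀ᶠ t in 𝓝 0, HasDerivAt (g ∘ γ) 0 t := by
    filter_upwards [hev, hγcont.eventually hgx, hqg.eventually_nhds, hqg]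
      with t ht hgt hqgt hqg0
    refine hasDerivAt_comp_zero_of_eventually_const q ht.1 hgt.1 hgt.2 ?_
    filter_upwards [hqgt] with s hs
    rw [hs, hqg0]
  filter_upwards [hev, eventually_eq_of_eventually_hasDerivAt_zero hderiv] with t h1 h2
  exact ⟨h1.1, by simpa [hγ0] using h2⟩

theorem ContDiffAt.frequently_eq_of_finrank_range_hessian_lt {L : E → ℝ} {x₀ : E}
    (hL : ContDiffAt ℝ 2 L x₀) (hcrit : fderiv ℝ L x₀ = 0)
    (hrank : ∀ᶠ x in 𝓝 x₀,
      finrank ℝ (LinearMap.range (fderiv ℝ (fderiv ℝ L) x : E →ₗ[ℝ] E →L[ℝ] ℝ)) ≤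
        finrank ℝ (LinearMap.range (fderiv ℝ (fderiv ℝ L) x₀ : E →ₗ[ℝ] E →L[ℝ] ℝ)))
    (hlt : finrank ℝ (LinearMap.range (fderiv ℝ (fderiv ℝ L) x₀ : E →ₗ[ℝ] E →L[ℝ] ℝ)) <
      finrank ℝ E) :
    ∃ᶠ y in 𝓝[≠] x₀, L y = L x₀ := by
  obtain ⟨γ, hγ0, hγ, hev⟩ :=
    (hL.fderiv_right (m := 1) le_rfl).exists_curve_of_finrank_range_fderiv_lt hrank hlt
  have hγcont : Tendsto γ (𝓝 0) (𝓝 x₀) := hγ0 ▸ hev.self_of_nhds.1.continuousAt.tendsto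
  have hLγ : ∀ᶠ t in 𝓝 0, HasDerivAt (L ∘ γ) 0 t := by
    filter_upwards [hev, hγcont.eventually (hL.eventually (by simp))] with t ht hLt
    have h := ((hLt.differentiableAt two_ne_zero).hasFDerivAt.comp_hasDerivAt t
      ht.1.hasDerivAt)
    rwa [ht.2, hcrit, zero_apply] at h
  have hLγ0 : ∀ᶠ t in 𝓝[≠] 0, L (γ t) = L x₀ :=
    nhdsWithin_le_nhds ((eventually_eq_of_eventually_hasDerivAt_zero hLγ).mono
      fun t ht => by simpa [hγ0] using ht)
  exact hγ.frequently hLγ0.frequently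

end ConstantRank

/-- Core of Theorem 2(i): let `r` be the maximal rank of the Hessian of a C² function
`L` over the open set `Ω ⊆ ℝ^k` (so the rank is everywhere `≤ r` and equals `r` at
`θ*`). If `L` has an isolated local maximum at `θ* ∈ Ω` where the Hessian rank is
maximal, then `r = k`. -/
theorem stmt_7 {k r : ℕ} {Ω : Set (Fin k → ℝ)} (hΩ : IsOpen Ω)
    (L : (Fin k → ℝ) → ℝ) (hL : ContDiffOn ℝ 2 L Ω)
    (hmax : ∀ θ ∈ Ω, (Matrix.of fun i j : Fin k =>
        fderiv ℝ (fun θ' => fderiv ℝ L θ' (Pi.single j 1)) θ (Pi.single i 1)).rank ≤ r)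
    (θs : Fin k → ℝ) (hθs : θs ∈ Ω)
    (hrank : (Matrix.of fun i j : Fin k =>
        fderiv ℝ (fun θ' => fderiv ℝ L θ' (Pi.single j 1)) θs (Pi.single i 1)).rank = r)
    (hlm : IsLocalMax L θs)
    (hiso : ∃ N ∈ nhds θs, ∀ δ ∈ N, IsLocalMax L δ → δ = θs) :
    r = k := by
  have hL2 : ∀ θ ∈ Ω, ContDiffAt ℝ 2 L θ := fun θ hθ => hL.contDiffAt (hΩ.mem_nhds hθ)
  have hrankH : ∀ θ ∈ Ω, _ := fun θ hθ => Matrix.rank_hessian_eq_finrank_range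
    (((hL2 θ hθ).fderiv_right (m := 1) le_rfl).differentiableAt one_ne_zero)
  refine le_antisymm (hrank ▸ Matrix.rank_le_width _) (not_lt.1 fun hlt => ?_)
  have hfreq := (hL2 θs hθs).frequently_eq_of_finrank_range_hessian_lt hlm.fderiv_eq_zero
    (by
      filter_upwards [hΩ.mem_nhds hθs] with θ hθ
      rw [← hrankH θ hθ, ← hrankH θs hθs, hrank]
      exact hmax θ hθ)
    (by rwa [← hrankH θs hθs, hrank, Module.finrank_fin_fun])
  obtain ⟨N, hN, hNmax⟩ := hiso
  have hnear : ∀ᶠ y in 𝓝[≠] θs, y ≠ θs ∧ y ∈ N ∧ (L y = L θs → IsLocalMax L y) :=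
    (eventually_mem_nhdsWithin (a := θs) (s := {θs}ᶜ)).and
      (nhdsWithin_le_nhds (inter_mem hN hlm.eventually_isLocalMax_of_eq))
  obtain ⟨y, hy, hne, hyN, hymax⟩ := (hfreq.and_eventually hnear).exists
  exact hne (hNmax y hyN (hymax hy))
end

section
/- Let Ω ⊆ ℝ^p be open, let θ₀ ∈ Ω, let L : Ω → ℝ be twice continuously differentiable, and let S ⊆ {1, …, p} with |S| = k. Suppose the k×k principal submatrix (∂²L/∂θ_i∂θ_j(θ₀))_{i,j∈S} of the Hessian of L at θ₀ is invertible. Then the restricted function of k variables, obtained from L by letting the coordinates in S vary and fixing the coordinates outside S at their values in θ₀, has an open neighborhood (in ℝ^k) of (θ₀)_S containing at most one turning point and at most one local maximum. (Thus the subset of parameters indexed by S is gradient weakly locally identifiable at θ₀.) -/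
/-!
Write the restricted function as `f y = L (A y + c)`, where `A` extends the `S`-coordinates by
zero. The Hessian of `f` at `(θ₀)_S` is then the given principal submatrix of the Hessian of `L`,
so the inverse function theorem makes the gradient of `f` injective near `(θ₀)_S`. Turning points
are zeros of the gradient, and so are local maxima.
-/

open Function Set Topology Module

section Calculus

variable {𝕜 : Type*} [NontriviallyNormedField 𝕜]
  {E : Type*} [NormedAddCommGroup E] [NormedSpace 𝕜 E]
  {F : Type*} [NormedAddCommGroup F] [NormedSpace 𝕜 F]
  {G : Type*} [NormedAddCommGroup G] [NormedSpace 𝕜 G]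

theorem HasStrictFDerivAt.exists_isOpen_injOn [CompleteSpace E] {g : E → F} {e : E ≃L[𝕜] F}
    {a : E} (hg : HasStrictFDerivAt g (e : E →L[𝕜] F) a) :
    ∃ N : Set E, IsOpen N ∧ a ∈ N ∧ InjOn g N := by
  refine ⟨_, (hg.toOpenPartialHomeomorph g).open_source,
    hg.mem_toOpenPartialHomeomorph_source, ?_⟩
  simpa only [hg.toOpenPartialHomeomorph_coe] using (hg.toOpenPartialHomeomorph g).injOn

theorem fderiv_clm_apply_const {c : E → F →L[𝕜] G} {x : E} (hc : DifferentiableAt 𝕜 c x)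
    (u : F) :
    fderiv 𝕜 (fun y => c y u) x = (fderiv 𝕜 c x).flip u := by
  simp [fderiv_clm_apply hc (differentiableAt_const u)]

theorem fderiv_fderiv_comp_add_const {L : F → 𝕜} {A : E →L[𝕜] F} {c : F} {a : E}
    (hL : ContDiffAt 𝕜 2 L (A a + c)) (u v : E) :
    fderiv 𝕜 (fderiv 𝕜 fun y => L (A y + c)) a u v =
      fderiv 𝕜 (fderiv 𝕜 L) (A a + c) (A u) (A v) := by
  have hφ : ∀ y, HasFDerivAt (fun y => A y + c) A y := fun y => A.hasFDerivAt.add_const c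
  have hdiff : ∀ᶠ y in 𝓝 a, DifferentiableAt 𝕜 L (A y + c) :=
    ((hφ a).continuousAt.eventually (hL.eventually (by simp))).mono fun y hy =>
      hy.differentiableAt (by simp)
  have hfderiv :
      fderiv 𝕜 (fun y => L (A y + c)) =ᶠ[𝓝 a] fun y => (fderiv 𝕜 L (A y + c)).comp A :=
    hdiff.mono fun y hy => by rw [fderiv_fun_comp y hy (hφ y).differentiableAt, (hφ y).fderiv]
  have hH : HasFDerivAt (fderiv 𝕜 L) (fderiv 𝕜 (fderiv 𝕜 L) (A a + c)) (A a + c) :=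
    ((hL.fderiv_right (m := 1) le_rfl).differentiableAt one_ne_zero).hasFDerivAt
  rw [(((hH.comp a (hφ a)).clm_comp (hasFDerivAt_const A a)).congr_of_eventuallyEq
    hfderiv).fderiv]
  simp

theorem ContinuousLinearMap.finrank_strongDual [CompleteSpace 𝕜] [FiniteDimensional 𝕜 E] :
    finrank 𝕜 (E →L[𝕜] 𝕜) = finrank 𝕜 E :=
  (LinearMap.toContinuousLinearMap (𝕜 := 𝕜) (E := E) (F' := 𝕜)).finrank_eq.symm.trans
    Subspace.dual_finrank_eq

end Calculus

theorem ContDiffAt.exists_isOpen_injOn_fderiv {𝕜 : Type*} [RCLike 𝕜]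
    {E : Type*} [NormedAddCommGroup E] [NormedSpace 𝕜 E] [FiniteDimensional 𝕜 E]
    {f : E → 𝕜} {a : E} (hf : ContDiffAt 𝕜 2 f a)
    (hD : Injective (fderiv 𝕜 (fderiv 𝕜 f) a)) :
    ∃ N : Set E, IsOpen N ∧ a ∈ N ∧ InjOn (fderiv 𝕜 f) N := by
  set D := fderiv 𝕜 (fderiv 𝕜 f) a
  let e : E ≃L[𝕜] (E →L[𝕜] 𝕜) :=
    ((D : E →ₗ[𝕜] E →L[𝕜] 𝕜).linearEquivOfInjective hD
      ContinuousLinearMap.finrank_strongDual.symm).toContinuousLinearEquiv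
  have he : (e : E →L[𝕜] E →L[𝕜] 𝕜) = D := by ext1 v; rfl
  have := FiniteDimensional.complete 𝕜 E
  have hstrict := (hf.fderiv_right (m := 1) le_rfl).hasStrictFDerivAt one_ne_zero
  exact HasStrictFDerivAt.exists_isOpen_injOn (e := e) (he ▸ hstrict)

theorem ContinuousLinearMap.injective_of_isUnit_det {𝕜 : Type*} [NontriviallyNormedField 𝕜]
    {ι : Type*} [Fintype ι] [DecidableEq ι] {D : (ι → 𝕜) →L[𝕜] (ι → 𝕜) →L[𝕜] 𝕜}
    {M : Matrix ι ι 𝕜} (h : IsUnit M.det)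
    (hM : ∀ i j, D (Pi.single i 1) (Pi.single j 1) = M i j) :
    Injective D := by
  set B := ContinuousLinearMap.toLinearMap₁₂ D
  have hB : LinearMap.toMatrix₂' 𝕜 B = M := by
    ext i j; simp [B, LinearMap.toMatrix₂'_apply, hM]
  have hsep : B.SeparatingLeft := by
    rw [← Matrix.toLinearMap₂'_toMatrix' (R := 𝕜) B, hB]
    exact LinearMap.separatingLeft_toLinearMap₂'_of_det_ne_zero' h.ne_zero
  intro v w hvw
  rw [← sub_eq_zero]
  exact hsep _ fun u => by simp [B, hvw]

namespace Finset

variable (𝕜 : Type*) [NontriviallyNormedField 𝕜] {ι : Type*} [DecidableEq ι] (S : Finset ι)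

def extendByZero : (S → 𝕜) →L[𝕜] (ι → 𝕜) :=
  ContinuousLinearMap.pi fun i => if h : i ∈ S then ContinuousLinearMap.proj ⟨i, h⟩ else 0

variable {𝕜 S}

theorem extendByZero_apply (y : S → 𝕜) (i : ι) :
    S.extendByZero 𝕜 y i = if h : i ∈ S then y ⟨i, h⟩ else 0 := by
  simp only [extendByZero, ContinuousLinearMap.pi_apply]
  split <;> rfl

theorem extendByZero_single (j : S) :
    S.extendByZero 𝕜 (Pi.single j 1) = Pi.single j.1 (1 : 𝕜) := by
  ext i
  rw [extendByZero_apply]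
  split
  · next h => simp [Pi.single_apply, Subtype.ext_iff]
  · next h => simp [show i ≠ j from fun hij => h (hij ▸ j.2)]

theorem dite_mem_eq_extendByZero_add (θ : ι → 𝕜) (y : S → 𝕜) :
    (fun i => if h : i ∈ S then y ⟨i, h⟩ else θ i) =
      S.extendByZero 𝕜 y + (S : Set ι)ᶜ.indicator θ := by
  ext i
  by_cases h : i ∈ S <;> simp [extendByZero_apply, h]

end Finset

theorem stmt_13_general {p : ℕ} {Ω : Set (Fin p → ℝ)} (hΩ : IsOpen Ω)
    (L : (Fin p → ℝ) → ℝ) (hL : ContDiffOn ℝ 2 L Ω)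
    (θ₀ : Fin p → ℝ) (hθ₀ : θ₀ ∈ Ω)
    (S : Finset (Fin p))
    (hsub : IsUnit (Matrix.of fun i j : {i // i ∈ S} =>
        fderiv ℝ (fun θ => fderiv ℝ L θ (Pi.single j.1 1)) θ₀ (Pi.single i.1 1)).det) :
    ∃ N' : Set ({i // i ∈ S} → ℝ), IsOpen N' ∧
      (fun i : {i // i ∈ S} => θ₀ i.1) ∈ N' ∧
      (∀ y₁ ∈ N', ∀ y₂ ∈ N',
        fderiv ℝ (fun y : {i // i ∈ S} → ℝ =>
          L fun i => if h : i ∈ S then y ⟨i, h⟩ else θ₀ i) y₁ = 0 →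
        fderiv ℝ (fun y : {i // i ∈ S} → ℝ =>
          L fun i => if h : i ∈ S then y ⟨i, h⟩ else θ₀ i) y₂ = 0 →
        y₁ = y₂) ∧
      (∀ y₁ ∈ N', ∀ y₂ ∈ N',
        IsLocalMax (fun y : {i // i ∈ S} → ℝ =>
          L fun i => if h : i ∈ S then y ⟨i, h⟩ else θ₀ i) y₁ →
        IsLocalMax (fun y : {i // i ∈ S} → ℝ =>
          L fun i => if h : i ∈ S then y ⟨i, h⟩ else θ₀ i) y₂ →
        y₁ = y₂) := by
  set A := S.extendByZero ℝ
  set c := (S : Set (Fin p))ᶜ.indicator θ₀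
  set y₀ : S → ℝ := fun i => θ₀ i.1
  have hy₀ : A y₀ + c = θ₀ := by
    rw [← Finset.dite_mem_eq_extendByZero_add]
    ext i; split <;> rfl
  have hf : (fun y : S → ℝ => L fun i => if h : i ∈ S then y ⟨i, h⟩ else θ₀ i) =
      fun y => L (A y + c) := by
    simp only [Finset.dite_mem_eq_extendByZero_add, A, c]
  have hLθ₀ : ContDiffAt ℝ 2 L θ₀ := hL.contDiffAt (hΩ.mem_nhds hθ₀)
  have hL₀ : ContDiffAt ℝ 2 L (A y₀ + c) := hy₀ ▸ hLθ₀
  have hHess : ∀ i j : S,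
      fderiv ℝ (fderiv ℝ fun y => L (A y + c)) y₀ (Pi.single i 1) (Pi.single j 1) =
        fderiv ℝ (fun θ => fderiv ℝ L θ (Pi.single j.1 1)) θ₀ (Pi.single i.1 1) := by
    intro i j
    rw [fderiv_fderiv_comp_add_const hL₀, Finset.extendByZero_single, Finset.extendByZero_single,
      hy₀, fderiv_clm_apply_const]
    · rfl
    · exact (hLθ₀.fderiv_right (m := 1) le_rfl).differentiableAt one_ne_zero
  obtain ⟨N, hN, hy₀N, hinj⟩ := ContDiffAt.exists_isOpen_injOn_fderiv
    (hL₀.comp y₀ (A.contDiff.add contDiff_const).contDiffAt)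
    (ContinuousLinearMap.injective_of_isUnit_det hsub hHess)
  rw [hf]
  have hcrit : ∀ y₁ ∈ N, ∀ y₂ ∈ N, fderiv ℝ (fun y => L (A y + c)) y₁ = 0 →
      fderiv ℝ (fun y => L (A y + c)) y₂ = 0 → y₁ = y₂ :=
    fun y₁ h₁ y₂ h₂ e₁ e₂ => hinj h₁ h₂ (e₁.trans e₂.symm)
  exact ⟨N, hN, hy₀N, hcrit, fun y₁ h₁ y₂ h₂ m₁ m₂ =>
    hcrit y₁ h₁ y₂ h₂ m₁.fderiv_eq_zero m₂.fderiv_eq_zero⟩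

/-- Corollary 2(i): if the `k × k` principal submatrix of the Hessian of a C² function
`L` at `θ₀ ∈ Ω` indexed by a subset `S` of `k` coordinates is invertible, then the
restriction of `L` to the coordinates in `S` (the remaining coordinates fixed at their
values in `θ₀`) has an open neighborhood of the `S`-coordinates of `θ₀` containing at
most one turning point and at most one local maximum; i.e. the parameter subset indexed
by `S` is gradient weakly locally identifiable at `θ₀`. -/
theorem stmt_13 {p k : ℕ} {Ω : Set (Fin p → ℝ)} (hΩ : IsOpen Ω)
    (L : (Fin p → ℝ) → ℝ) (hL : ContDiffOn ℝ 2 L Ω)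
    (θ₀ : Fin p → ℝ) (hθ₀ : θ₀ ∈ Ω)
    (S : Finset (Fin p)) (hS : S.card = k)
    (hsub : IsUnit (Matrix.of fun i j : {i // i ∈ S} =>
        fderiv ℝ (fun θ => fderiv ℝ L θ (Pi.single j.1 1)) θ₀ (Pi.single i.1 1)).det) :
    ∃ N' : Set ({i // i ∈ S} → ℝ), IsOpen N' ∧
      (fun i : {i // i ∈ S} => θ₀ i.1) ∈ N' ∧
      (∀ y₁ ∈ N', ∀ y₂ ∈ N',
        fderiv ℝ (fun y : {i // i ∈ S} → ℝ =>
          L fun i => if h : i ∈ S then y ⟨i, h⟩ else θ₀ i) y₁ = 0 →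
        fderiv ℝ (fun y : {i // i ∈ S} → ℝ =>
          L fun i => if h : i ∈ S then y ⟨i, h⟩ else θ₀ i) y₂ = 0 →
        y₁ = y₂) ∧
      (∀ y₁ ∈ N', ∀ y₂ ∈ N',
        IsLocalMax (fun y : {i // i ∈ S} → ℝ =>
          L fun i => if h : i ∈ S then y ⟨i, h⟩ else θ₀ i) y₁ →
        IsLocalMax (fun y : {i // i ∈ S} → ℝ =>
          L fun i => if h : i ∈ S then y ⟨i, h⟩ else θ₀ i) y₂ →
        y₁ = y₂) :=
  stmt_13_general hΩ L hL θ₀ hθ₀ S hsub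
end

section
/- Let Ω ⊆ ℝ^p be open, let X be a finite set of data values with weights w : X → ℝ, let G = (G_1, …, G_N) : Ω → ℝ^N be twice continuously differentiable, and let M : X × ℝ^N → ℝ be twice continuously differentiable in its second argument. Define L(x, θ) = M(x, G(θ)). Fix θ₀ ∈ Ω and suppose the weighted score in G vanishes: Σ_{x∈X} w(x) · (∂M/∂g_l)(x, G(θ₀)) = 0 for each l = 1, …, N. Then the p×p matrix I(θ₀) with entries I(θ₀)_{ij} = −Σ_{x∈X} w(x) · (∂²/∂θ_i∂θ_j)[L(x, θ)]|_{θ=θ₀} satisfies I(θ₀) = −J^T B J, where J is the N×p Jacobian of G at θ₀ and B_{lk} = Σ_{x∈X} w(x)·(∂²M/∂g_l∂g_k)(x, G(θ₀)); in particular rank I(θ₀) ≤ N. -/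
/-!
By the second-order chain rule, `D²L(x, ·)(θ₀)(u, v) = D²M(x, ·)(G θ₀)(DG u, DG v)
+ DM(x, ·)(G θ₀)(D²G(θ₀)(u, v))`. After weighting and summing over `x`, the second term is the
weighted score applied to `D²G(θ₀)(u, v)`, hence vanishes, and the first is the bilinear form
`B` pulled back along `DG(θ₀)`, whose matrix is `Jᵀ B J`. This matrix factors through `ℝ^N`.
-/

open ContinuousLinearMap Filter Topology

section

variable {𝕜 E F G : Type*} [NontriviallyNormedField 𝕜]
  [NormedAddCommGroup E] [NormedSpace 𝕜 E] [NormedAddCommGroup F] [NormedSpace 𝕜 F]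
  [NormedAddCommGroup G] [NormedSpace 𝕜 G]

theorem fderiv_clm_apply_const_apply {c : E → F →L[𝕜] G} {x : E} (hc : DifferentiableAt 𝕜 c x)
    (u : E) (v : F) : fderiv 𝕜 (fun y => c y v) x u = fderiv 𝕜 c x u v := by
  simp [fderiv_clm_apply hc (differentiableAt_const v)]

theorem fderiv_fderiv_comp_apply {f : F → G} {g : E → F} {x : E}
    (hf : ContDiffAt 𝕜 2 f (g x)) (hg : ContDiffAt 𝕜 2 g x) (u v : E) :
    fderiv 𝕜 (fderiv 𝕜 (f ∘ g)) x u v =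
      fderiv 𝕜 (fderiv 𝕜 f) (g x) (fderiv 𝕜 g x u) (fderiv 𝕜 g x v) +
        fderiv 𝕜 f (g x) (fderiv 𝕜 (fderiv 𝕜 g) x u v) := by
  have hf' : DifferentiableAt 𝕜 (fderiv 𝕜 f) (g x) :=
    (hf.fderiv_right (m := 1) le_rfl).differentiableAt one_ne_zero
  have hg' : DifferentiableAt 𝕜 (fderiv 𝕜 g) x :=
    (hg.fderiv_right (m := 1) le_rfl).differentiableAt one_ne_zero
  have hchain : fderiv 𝕜 (f ∘ g) =ᶠ[𝓝 x] fun y => (fderiv 𝕜 f (g y)).comp (fderiv 𝕜 g y) := by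
    filter_upwards [hg.continuousAt.eventually (hf.eventually (by simp)), hg.eventually (by simp)]
      with y hfy hgy
    exact fderiv_comp y (hfy.differentiableAt two_ne_zero) (hgy.differentiableAt two_ne_zero)
  rw [hchain.fderiv_eq,
    fderiv_clm_comp (c := fun y => fderiv 𝕜 f (g y)) (hf'.comp x (hg.differentiableAt two_ne_zero))
      hg', fderiv_fun_comp x hf' (hg.differentiableAt two_ne_zero)]
  simp [add_comm]

end

theorem bilinear_matrix_comp_eq_transpose_mul_mul {𝕜 ι κ : Type*} [NontriviallyNormedField 𝕜]
    [Fintype ι] [DecidableEq ι] [Fintype κ] [DecidableEq κ]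
    (H : (κ → 𝕜) →L[𝕜] (κ → 𝕜) →L[𝕜] 𝕜) (A : (ι → 𝕜) →L[𝕜] (κ → 𝕜)) :
    Matrix.of (fun i j => H (A (Pi.single i 1)) (A (Pi.single j 1))) =
      (LinearMap.toMatrix' A.toLinearMap).transpose *
        Matrix.of (fun l k => H (Pi.single l 1) (Pi.single k 1)) *
          LinearMap.toMatrix' A.toLinearMap :=
  LinearMap.toMatrix₂'_compl₁₂ ((coeLM 𝕜).comp H.toLinearMap) A.toLinearMap A.toLinearMap

/-- Equation (5) of the paper: if the log-likelihood factors through `N` scalar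
functions, `L x θ = M x (G θ)`, and at `θ₀` the weighted score in `G` vanishes, then
the (weighted-expectation) Fisher information matrix
`I(θ₀)ᵢⱼ = -∑ₓ w x · ∂²L(x,·)/∂θᵢ∂θⱼ(θ₀)` equals `-(Jᵀ B J)` where `J` is the Jacobian
of `G` at `θ₀` and `B` is the weighted Hessian of `M` in `G`; in particular
`rank I(θ₀) ≤ N`. -/
theorem stmt_14 {p N : ℕ} {Ω : Set (Fin p → ℝ)} (hΩ : IsOpen Ω)
    (X : Type*) [Fintype X] (w : X → ℝ)
    (G : (Fin p → ℝ) → (Fin N → ℝ)) (hG : ContDiffOn ℝ 2 G Ω)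
    (M : X → (Fin N → ℝ) → ℝ) (hM : ∀ x, ContDiff ℝ 2 (M x))
    (L : X → (Fin p → ℝ) → ℝ) (hLdef : ∀ x θ, L x θ = M x (G θ))
    (θ₀ : Fin p → ℝ) (hθ₀ : θ₀ ∈ Ω)
    (hscore : ∀ l : Fin N, ∑ x, w x * fderiv ℝ (M x) (G θ₀) (Pi.single l 1) = 0)
    (I : Matrix (Fin p) (Fin p) ℝ)
    (hIdef : ∀ i j, I i j = -∑ x, w x *
        fderiv ℝ (fun θ => fderiv ℝ (L x) θ (Pi.single j 1)) θ₀ (Pi.single i 1))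
    (J : Matrix (Fin N) (Fin p) ℝ)
    (hJdef : ∀ l i, J l i = fderiv ℝ (fun θ => G θ l) θ₀ (Pi.single i 1))
    (B : Matrix (Fin N) (Fin N) ℝ)
    (hBdef : ∀ l k, B l k = ∑ x, w x *
        fderiv ℝ (fun g => fderiv ℝ (M x) g (Pi.single k 1)) (G θ₀) (Pi.single l 1)) :
    I = -(J.transpose * B * J) ∧ I.rank ≤ N := by
  have hG₀ : ContDiffAt ℝ 2 G θ₀ := hG.contDiffAt (hΩ.mem_nhds hθ₀)
  set DG := fderiv ℝ G θ₀
  set H := ∑ x, w x • fderiv ℝ (fderiv ℝ (M x)) (G θ₀)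
  have hscore_eq_zero : ∑ x, w x • fderiv ℝ (M x) (G θ₀) = 0 :=
    coe_injective <| (Pi.basisFun ℝ (Fin N)).ext fun l => by simpa using hscore l
  have hscore_apply : ∀ c, ∑ x, w x * fderiv ℝ (M x) (G θ₀) c = 0 := fun c => by
    simpa using congrArg (· c) hscore_eq_zero
  have hL : ∀ x, L x = M x ∘ G := fun x => funext (hLdef x)
  have hL₀ : ∀ x, DifferentiableAt ℝ (fderiv ℝ (L x)) θ₀ := fun x => by
    rw [hL]
    exact (((hM x).contDiffAt.comp θ₀ hG₀).fderiv_right (m := 1) le_rfl).differentiableAt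
      one_ne_zero
  have hI : I = -Matrix.of fun i j => H (DG (Pi.single i 1)) (DG (Pi.single j 1)) := by
    ext i j
    simp_rw [hIdef, fderiv_clm_apply_const_apply (hL₀ _), hL,
      fderiv_fderiv_comp_apply (hM _).contDiffAt hG₀]
    simp [H, DG, mul_add, Finset.sum_add_distrib, hscore_apply]
  have hJ : J = LinearMap.toMatrix' DG.toLinearMap := by
    ext l i
    rw [hJdef, fderiv_apply (hG₀.differentiableAt two_ne_zero)]
    rfl
  have hB : B = Matrix.of fun l k => H (Pi.single l 1) (Pi.single k 1) := by
    ext l k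
    simp [hBdef, H, fderiv_clm_apply_const_apply
      (((hM _).fderiv_right (m := 1) le_rfl).differentiable one_ne_zero _)]
  have hIJBJ : I = -(J.transpose * B * J) := by
    rw [hI, hB, hJ, bilinear_matrix_comp_eq_transpose_mul_mul]
  refine ⟨hIJBJ, ?_⟩
  calc I.rank = (-(J.transpose * B) * J).rank := by rw [hIJBJ, Matrix.neg_mul]
    _ ≤ (-(J.transpose * B)).rank := Matrix.rank_mul_le_left _ _
    _ ≤ N := Matrix.rank_le_width _
end
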